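/- Let f : ℝ → ℝ be infinitely differentiable and x₀ ∈ ℝ with f'(x₀) = 0 and f''(x₀) ≠ 0. For Δx > 0 set f_m = f(x₀ + mΔx), define the Jiang–Shu smoothness indicators β₀(Δx) = (13/12)(f₋₂ − 2f₋₁ + f₀)² + (1/4)(f₋₂ − 4f₋₁ + 3f₀)², β₁(Δx) = (13/12)(f₋₁ − 2f₀ + f₁)² + (1/4)(f₁ − f₋₁)², β₂(Δx) = (13/12)(f₀ − 2f₁ + f₂)² + (1/4)(3f₀ − 4f₁ + f₂)², and with d₀ = 1/10, d₁ = 6/10, d₂ = 3/10 set α_k(Δx) = d_k/β_k(Δx)² and ω_k(Δx) = α_k(Δx)/(α₀(Δx) + α₁(Δx) + α₂(Δx)) (taking ε = 0). Then for each k ∈ {0,1,2}, ω_k(Δx) − d_k = O(Δx) as Δx → 0⁺. -/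

import Mathlib

open Filter Asymptotics Topology

lemma wjs_bootstrap {r : ℝ → ℝ} (hd : Differentiable ℝ r) (h0 : r 0 = 0) {n : ℕ}
    (h : deriv r =O[𝓝 (0:ℝ)] fun t => t ^ n) :
    r =O[𝓝 (0:ℝ)] fun t => t ^ (n + 1) := by
  obtain ⟨C, hC0, hC⟩ := h.exists_nonneg
  rw [IsBigOWith, Metric.eventually_nhds_iff] at hC
  obtain ⟨δ, hδ, hb⟩ := hC
  rw [isBigO_iff]
  refine ⟨C, Metric.eventually_nhds_iff.mpr ⟨δ, hδ, fun t ht => ?_⟩⟩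
  have key : ‖r t - r 0‖ ≤ (C * ‖t‖ ^ n) * ‖t - 0‖ := by
    refine Convex.norm_image_sub_le_of_norm_deriv_le (s := Metric.closedBall 0 ‖t‖)
      (fun x _ => hd.differentiableAt) ?_ (convex_closedBall _ _) ?_ ?_
    · intro x hx
      have hx' : ‖x‖ ≤ ‖t‖ := by simpa using hx
      have hxδ : dist x 0 < δ := by
        rw [dist_zero_right]
        exact lt_of_le_of_lt hx' (by simpa [dist_zero_right] using ht)
      calc ‖deriv r x‖ ≤ C * ‖x ^ n‖ := hb hxδ
        _ ≤ C * ‖t‖ ^ n := by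
            rw [norm_pow]
            exact mul_le_mul_of_nonneg_left (pow_le_pow_left₀ (norm_nonneg _) hx' n) hC0
    · simpa using norm_nonneg t
    · simp [Metric.mem_closedBall, dist_zero_right]
  rw [h0, sub_zero, sub_zero] at key
  calc ‖r t‖ ≤ C * ‖t‖ ^ n * ‖t‖ := key
    _ = C * ‖t ^ (n + 1)‖ := by rw [norm_pow]; ring

lemma wjs_taylor2 (f : ℝ → ℝ) (hf : ContDiff ℝ (⊤ : ℕ∞) f) (x₀ : ℝ) (hf' : deriv f x₀ = 0) :
    (fun t => f (x₀ + t) - f x₀ - iteratedDeriv 2 f x₀ / 2 * t ^ 2)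
      =O[𝓝 (0:ℝ)] fun t => t ^ 3 := by
  set c₂ := iteratedDeriv 2 f x₀ with hc₂def
  have hd0 : Differentiable ℝ f := hf.differentiable (by simp)
  have hd1 : Differentiable ℝ (deriv f) := by
    have := hf.differentiable_iteratedDeriv 1 (by exact_mod_cast lt_top_iff_ne_top.mpr (by simp))
    simpa [iteratedDeriv_one] using this
  have hd2 : Differentiable ℝ (iteratedDeriv 2 f) :=
    hf.differentiable_iteratedDeriv 2 (WithTop.coe_lt_coe.mpr (ENat.natCast_lt_top 2))
  have hcont3 : Continuous (iteratedDeriv 3 f) := hf.continuous_iteratedDeriv 3 (WithTop.coe_le_coe.mpr le_top)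
  -- step 0 : g = iteratedDeriv 2 f (x₀ + ·) - c₂  is O(t)
  have hg : (fun t => iteratedDeriv 2 f (x₀ + t) - c₂) =O[𝓝 (0:ℝ)] fun t => t ^ 1 := by
    refine wjs_bootstrap (n := 0) ?_ (by simp [hc₂def]) ?_
    · exact (hd2.comp ((differentiable_id).const_add x₀)).sub_const c₂
    · have hderiv : deriv (fun t => iteratedDeriv 2 f (x₀ + t) - c₂)
          = fun t => iteratedDeriv 3 f (x₀ + t) := by
        funext t
        rw [deriv_sub_const, deriv_comp_const_add, ← iteratedDeriv_succ]
      rw [hderiv]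
      have : Tendsto (fun t => iteratedDeriv 3 f (x₀ + t)) (𝓝 (0:ℝ))
          (𝓝 (iteratedDeriv 3 f (x₀ + 0))) :=
        (hcont3.comp (continuous_const.add continuous_id)).tendsto 0
      simpa using this.isBigO_one ℝ
  -- step 1 : r1 = deriv f (x₀ + ·) - c₂ * t is O(t²)
  have hr1 : (fun t => deriv f (x₀ + t) - c₂ * t) =O[𝓝 (0:ℝ)] fun t => t ^ 2 := by
    refine wjs_bootstrap (n := 1) ?_ (by simp [hf']) ?_
    · exact (hd1.comp ((differentiable_id).const_add x₀)).sub (differentiable_id.const_mul c₂)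
    · have hderiv : deriv (fun t => deriv f (x₀ + t) - c₂ * t)
          = fun t => iteratedDeriv 2 f (x₀ + t) - c₂ := by
        funext t
        rw [deriv_fun_sub (by exact ((hd1 (x₀+t)).comp t (((differentiable_id).const_add x₀) t)))
          (by fun_prop)]
        rw [deriv_comp_const_add]
        have hm : deriv (HMul.hMul c₂) t = c₂ := by
          simpa using ((hasDerivAt_id t).const_mul c₂).deriv
        rw [hm]
        simp [iteratedDeriv_succ, iteratedDeriv_one]
      rw [hderiv]
      exact hg
  -- step 2
  refine wjs_bootstrap (n := 2) ?_ (by simp) ?_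
  · exact ((hd0.comp ((differentiable_id).const_add x₀)).sub_const (f x₀)).sub
      ((differentiable_id.pow 2).const_mul (c₂ / 2))
  · have hderiv : deriv (fun t => f (x₀ + t) - f x₀ - c₂ / 2 * t ^ 2)
        = fun t => deriv f (x₀ + t) - c₂ * t := by
      funext t
      rw [deriv_fun_sub (by exact (((hd0 (x₀+t)).comp t (((differentiable_id).const_add x₀) t)).sub_const (f x₀))
        ) (by fun_prop)]
      rw [deriv_sub_const, deriv_comp_const_add]
      simp only [deriv_const_mul_field]
      rw [deriv_pow_field]
      ring
    rw [hderiv]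
    exact hr1

lemma wjs_pow_isBigO {i j : ℕ} (hij : i ≤ j) :
    (fun x : ℝ => x ^ j) =O[𝓝 (0:ℝ)] fun x => x ^ i := by
  have h1 : (fun x : ℝ => x ^ j) = fun x => x ^ i * x ^ (j - i) := by
    funext x; rw [← pow_add]; congr 1; omega
  rw [h1]
  have h2 : Tendsto (fun x : ℝ => x ^ (j - i)) (𝓝 0) (𝓝 (0 ^ (j - i))) :=
    (continuous_pow (j - i)).tendsto 0
  calc (fun x : ℝ => x ^ i * x ^ (j - i))
      =O[𝓝 (0:ℝ)] (fun x : ℝ => x ^ i * 1) := (isBigO_refl _ _).mul (h2.isBigO_one ℝ)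
    _ = fun x => x ^ i := by funext x; rw [mul_one]

/-- Jiang–Shu smoothness indicator of the sub-stencil `S_k`, `k ∈ {0,1,2}`, at
grid spacing `Δx`, built from the grid values `f(x₀ + mΔx)`. -/
noncomputable def betaJS (f : ℝ → ℝ) (x₀ : ℝ) (k : Fin 3) (Δx : ℝ) : ℝ :=
  if k = 0 then
    (13 / 12) * (f (x₀ - 2 * Δx) - 2 * f (x₀ - Δx) + f x₀) ^ 2
      + (1 / 4) * (f (x₀ - 2 * Δx) - 4 * f (x₀ - Δx) + 3 * f x₀) ^ 2
  else if k = 1 then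
    (13 / 12) * (f (x₀ - Δx) - 2 * f x₀ + f (x₀ + Δx)) ^ 2
      + (1 / 4) * (f (x₀ + Δx) - f (x₀ - Δx)) ^ 2
  else
    (13 / 12) * (f x₀ - 2 * f (x₀ + Δx) + f (x₀ + 2 * Δx)) ^ 2
      + (1 / 4) * (3 * f x₀ - 4 * f (x₀ + Δx) + f (x₀ + 2 * Δx)) ^ 2

/-- The ideal weights `d₀ = 1/10, d₁ = 6/10, d₂ = 3/10`. -/
noncomputable def dIdeal : Fin 3 → ℝ := ![1 / 10, 6 / 10, 3 / 10]

/-- Unnormalized WENO-JS weight (with `ε = 0`). -/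
noncomputable def alphaJS (f : ℝ → ℝ) (x₀ : ℝ) (k : Fin 3) (Δx : ℝ) : ℝ :=
  dIdeal k / (betaJS f x₀ k Δx) ^ 2

/-- Normalized WENO-JS nonlinear weight (with `ε = 0`). -/
noncomputable def omegaJS (f : ℝ → ℝ) (x₀ : ℝ) (k : Fin 3) (Δx : ℝ) : ℝ :=
  alphaJS f x₀ k Δx / (alphaJS f x₀ 0 Δx + alphaJS f x₀ 1 Δx + alphaJS f x₀ 2 Δx)

lemma wjs_beta (f : ℝ → ℝ) (hf : ContDiff ℝ (⊤ : ℕ∞) f) (x₀ : ℝ) (hf' : deriv f x₀ = 0) (k : Fin 3) :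
    (fun Δx => betaJS f x₀ k Δx - 13 / 12 * (iteratedDeriv 2 f x₀) ^ 2 * Δx ^ 4)
      =O[𝓝 (0:ℝ)] fun Δx => Δx ^ 5 := by
  set c₂ := iteratedDeriv 2 f x₀ with hc₂def
  have hr := wjs_taylor2 f hf x₀ hf'
  have P : ∀ m : ℝ, (fun Δx : ℝ => f (x₀ + m * Δx) - f x₀ - c₂ / 2 * (m * Δx) ^ 2)
      =O[𝓝 (0:ℝ)] fun Δx => Δx ^ 3 := by
    intro m
    have htend : Tendsto (fun Δx : ℝ => m * Δx) (𝓝 0) (𝓝 0) := by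
      simpa using (continuous_mul_left m).tendsto (0:ℝ)
    have hcomp := hr.comp_tendsto htend
    simp only [Function.comp_def] at hcomp
    refine hcomp.trans ?_
    have h1 : (fun Δx : ℝ => (m * Δx) ^ 3) = fun Δx => m ^ 3 * Δx ^ 3 := by funext x; ring
    rw [h1]
    exact (isBigO_refl _ _).const_mul_left _
  have Pm2 : (fun Δx : ℝ => f (x₀ - 2 * Δx) - f x₀ - 2 * c₂ * Δx ^ 2)
      =O[𝓝 (0:ℝ)] fun Δx => Δx ^ 3 := by
    refine (P (-2)).congr_left fun Δx => ?_
    rw [show x₀ + (-2) * Δx = x₀ - 2 * Δx by ring]; ring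
  have Pm1 : (fun Δx : ℝ => f (x₀ - Δx) - f x₀ - c₂ / 2 * Δx ^ 2)
      =O[𝓝 (0:ℝ)] fun Δx => Δx ^ 3 := by
    refine (P (-1)).congr_left fun Δx => ?_
    rw [show x₀ + (-1) * Δx = x₀ - Δx by ring]; ring
  have Pp1 : (fun Δx : ℝ => f (x₀ + Δx) - f x₀ - c₂ / 2 * Δx ^ 2)
      =O[𝓝 (0:ℝ)] fun Δx => Δx ^ 3 := by
    refine (P 1).congr_left fun Δx => ?_
    rw [show x₀ + 1 * Δx = x₀ + Δx by ring]; ring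
  have Pp2 : (fun Δx : ℝ => f (x₀ + 2 * Δx) - f x₀ - 2 * c₂ * Δx ^ 2)
      =O[𝓝 (0:ℝ)] fun Δx => Δx ^ 3 := by
    refine (P 2).congr_left fun Δx => ?_
    rw [show x₀ + 2 * Δx = x₀ + 2 * Δx by ring]; ring
  -- generic combination lemma
  have comb : ∀ A B : ℝ → ℝ,
      (fun Δx => A Δx - c₂ * Δx ^ 2) =O[𝓝 (0:ℝ)] (fun Δx => Δx ^ 3) →
      B =O[𝓝 (0:ℝ)] (fun Δx => Δx ^ 3) →
      (fun Δx => (13 / 12 * (A Δx) ^ 2 + 1 / 4 * (B Δx) ^ 2) - 13 / 12 * c₂ ^ 2 * Δx ^ 4)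
        =O[𝓝 (0:ℝ)] fun Δx => Δx ^ 5 := by
    intro A B hA hB
    have hA2 : (fun Δx => A Δx + c₂ * Δx ^ 2) =O[𝓝 (0:ℝ)] fun Δx => Δx ^ 2 := by
      have h1 := (hA.trans (wjs_pow_isBigO (by norm_num : 2 ≤ 3))).add
        ((isBigO_refl (fun Δx : ℝ => Δx ^ 2) _).const_mul_left (2 * c₂))
      refine h1.congr_left fun Δx => by ring
    have h1 : (fun Δx => (A Δx - c₂ * Δx ^ 2) * (A Δx + c₂ * Δx ^ 2))
        =O[𝓝 (0:ℝ)] fun Δx => Δx ^ 5 := by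
      have := hA.mul hA2
      refine this.trans ?_
      refine (isBigO_refl _ _).congr_right fun Δx => ?_
      rw [← pow_add]
    have h2 : (fun Δx => B Δx * B Δx) =O[𝓝 (0:ℝ)] fun Δx => Δx ^ 5 := by
      have := hB.mul hB
      refine this.trans ?_
      refine ((wjs_pow_isBigO (by norm_num : 5 ≤ 6)).congr_left fun Δx => ?_)
      rw [← pow_add]
    have h3 := (h1.const_mul_left (13 / 12)).add (h2.const_mul_left (1 / 4))
    refine h3.congr_left fun Δx => by ring
  fin_cases k
  · have := comb (fun Δx => f (x₀ - 2 * Δx) - 2 * f (x₀ - Δx) + f x₀)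
      (fun Δx => f (x₀ - 2 * Δx) - 4 * f (x₀ - Δx) + 3 * f x₀)
      (by refine (Pm2.sub (Pm1.const_mul_left 2)).congr_left fun Δx => by ring)
      (by refine (Pm2.sub (Pm1.const_mul_left 4)).congr_left fun Δx => by ring)
    refine this.congr_left fun Δx => ?_
    simp [betaJS]
  · have := comb (fun Δx => f (x₀ - Δx) - 2 * f x₀ + f (x₀ + Δx))
      (fun Δx => f (x₀ + Δx) - f (x₀ - Δx))
      (by refine (Pm1.add Pp1).congr_left fun Δx => by ring)
      (by refine (Pp1.sub Pm1).congr_left fun Δx => by ring)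
    refine this.congr_left fun Δx => ?_
    simp [betaJS]
  · have := comb (fun Δx => f x₀ - 2 * f (x₀ + Δx) + f (x₀ + 2 * Δx))
      (fun Δx => 3 * f x₀ - 4 * f (x₀ + Δx) + f (x₀ + 2 * Δx))
      (by refine (Pp2.sub (Pp1.const_mul_left 2)).congr_left fun Δx => by ring)
      (by refine (Pp2.sub (Pp1.const_mul_left 4)).congr_left fun Δx => by ring)
    refine this.congr_left fun Δx => ?_
    simp [betaJS]
/-- At a first-order critical point (`f'(x₀) = 0`, `f''(x₀) ≠ 0`), the WENO-JS nonlinear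
weights satisfy `ω_k - d_k = O(Δx)` as `Δx → 0⁺`. -/
theorem wenoJS_weights_critical_point (f : ℝ → ℝ) (hf : ContDiff ℝ (⊤ : ℕ∞) f) (x₀ : ℝ)
    (hf' : deriv f x₀ = 0) (hf'' : iteratedDeriv 2 f x₀ ≠ 0) :
    ∀ k : Fin 3,
      (fun Δx : ℝ => omegaJS f x₀ k Δx - dIdeal k) =O[𝓝[>] (0 : ℝ)] fun Δx => Δx ^ 1 := by
  intro k
  set l := 𝓝[>] (0:ℝ) with hldef
  set c₂ := iteratedDeriv 2 f x₀ with hc₂def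
  have hc : (0:ℝ) < 13 / 12 * c₂ ^ 2 := by
    have : c₂ ≠ 0 := hf''
    positivity
  set c : ℝ := 13 / 12 * c₂ ^ 2 with hcdef
  set g : Fin 3 → ℝ → ℝ := fun j Δx => betaJS f x₀ j Δx / Δx ^ 4 with hgdef
  have hx : ∀ᶠ Δx in l, (0:ℝ) < Δx := by
    filter_upwards [self_mem_nhdsWithin] with a ha using ha
  -- g j - c = O(Δx)
  have hg : ∀ j, (fun Δx => g j Δx - c) =O[l] fun Δx => Δx ^ 1 := by
    intro j
    have h1 := ((wjs_beta f hf x₀ hf' j).mono nhdsWithin_le_nhds).mul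
      (isBigO_refl (fun Δx : ℝ => (Δx ^ 4)⁻¹) l)
    refine h1.congr' ?_ ?_
    · filter_upwards [hx] with Δx hΔ
      have h4 : (Δx:ℝ) ^ 4 ≠ 0 := by positivity
      simp only [hgdef]
      rw [hcdef]
      field_simp
      ring
    · filter_upwards [hx] with Δx hΔ
      have h4 : (Δx:ℝ) ^ 4 ≠ 0 := by positivity
      field_simp
  have ht : ∀ j, Tendsto (g j) l (𝓝 c) := by
    intro j
    have h0 : Tendsto (fun Δx : ℝ => Δx ^ 1) l (𝓝 0) := by
      have h := ((continuous_pow 1).tendsto (0:ℝ)).mono_left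
        (nhdsWithin_le_nhds (s := Set.Ioi (0:ℝ)))
      simpa using h
    have h1 : Tendsto (fun Δx => g j Δx - c) l (𝓝 0) := (hg j).trans_tendsto h0
    have := h1.add (tendsto_const_nhds (x := c))
    simpa using this
  have hgpos : ∀ j, ∀ᶠ Δx in l, 0 < g j Δx := fun j => (ht j).eventually (eventually_gt_nhds hc)
  have hβeq : ∀ᶠ Δx in l, ∀ j, betaJS f x₀ j Δx = g j Δx * Δx ^ 4 := by
    filter_upwards [hx] with Δx hΔ j
    have h4 : (Δx:ℝ) ^ 4 ≠ 0 := by positivity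
    simp only [hgdef]
    rw [div_mul_cancel₀ _ h4]
  set T : ℝ → ℝ := fun Δx =>
    1 / 10 / (g 0 Δx) ^ 2 + 6 / 10 / (g 1 Δx) ^ 2 + 3 / 10 / (g 2 Δx) ^ 2 with hTdef
  have hc2 : (0:ℝ) < c ^ 2 := pow_pos hc 2
  have hc2ne : (c:ℝ) ^ 2 ≠ 0 := ne_of_gt hc2
  have hLpos : (0:ℝ) < 1 / 10 / c ^ 2 + 6 / 10 / c ^ 2 + 3 / 10 / c ^ 2 := by
    have h1 : (0:ℝ) < 1 / 10 / c ^ 2 := by positivity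
    have h2 : (0:ℝ) < 6 / 10 / c ^ 2 := by positivity
    have h3 : (0:ℝ) < 3 / 10 / c ^ 2 := by positivity
    linarith
  have hT : Tendsto T l (𝓝 (1 / 10 / c ^ 2 + 6 / 10 / c ^ 2 + 3 / 10 / c ^ 2)) := by
    have t0 := tendsto_const_nhds (x := (1:ℝ)/10) (f := l) |>.div ((ht 0).pow 2) hc2ne
    have t1 := tendsto_const_nhds (x := (6:ℝ)/10) (f := l) |>.div ((ht 1).pow 2) hc2ne
    have t2 := tendsto_const_nhds (x := (3:ℝ)/10) (f := l) |>.div ((ht 2).pow 2) hc2ne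
    exact (t0.add t1).add t2
  have hTpos : ∀ᶠ Δx in l, 0 < T Δx := hT.eventually (eventually_gt_nhds hLpos)
  have hfactor : ∀ j, (fun Δx => 1 / (g k Δx) ^ 2 - 1 / (g j Δx) ^ 2) =O[l] fun Δx => Δx ^ 1 := by
    intro j
    have hdiff : (fun Δx => g j Δx - g k Δx) =O[l] fun Δx => Δx ^ 1 :=
      ((hg j).sub (hg k)).congr_left fun Δx => by ring
    have hH : Tendsto (fun Δx => (g j Δx + g k Δx) / ((g k Δx) ^ 2 * (g j Δx) ^ 2)) l
        (𝓝 ((c + c) / (c ^ 2 * c ^ 2))) :=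
      ((ht j).add (ht k)).div (((ht k).pow 2).mul ((ht j).pow 2)) (by positivity)
    have h2 := hdiff.mul (hH.isBigO_one ℝ)
    refine h2.congr' ?_ ?_
    · filter_upwards [hgpos j, hgpos k] with Δx h1 h3
      field_simp
      ring
    · filter_upwards with Δx
      rw [mul_one]
  have hbracket : (fun Δx => 1 / (g k Δx) ^ 2 - T Δx) =O[l] fun Δx => Δx ^ 1 := by
    have h := ((hfactor 0).const_mul_left (1/10)).add
      (((hfactor 1).const_mul_left (6/10)).add ((hfactor 2).const_mul_left (3/10)))
    refine h.congr_left fun Δx => ?_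
    simp only [hTdef]
    ring
  have hinv : Tendsto (fun Δx => dIdeal k / T Δx) l
      (𝓝 (dIdeal k / (1 / 10 / c ^ 2 + 6 / 10 / c ^ 2 + 3 / 10 / c ^ 2))) :=
    tendsto_const_nhds.div hT (ne_of_gt hLpos)
  have hω : ∀ᶠ Δx in l, omegaJS f x₀ k Δx - dIdeal k
      = (dIdeal k / T Δx) * (1 / (g k Δx) ^ 2 - T Δx) := by
    filter_upwards [hx, hgpos 0, hgpos 1, hgpos 2, hgpos k, hTpos, hβeq]
      with Δx hΔ h0 h1 h2 hk hT' hβq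
    have hΔne : (Δx:ℝ) ≠ 0 := ne_of_gt hΔ
    have hd0 : dIdeal 0 = 1/10 := by simp [dIdeal]
    have hd1 : dIdeal 1 = 6/10 := by simp [dIdeal]
    have hd2 : dIdeal 2 = 3/10 := by unfold dIdeal; rfl
    have hS : alphaJS f x₀ 0 Δx + alphaJS f x₀ 1 Δx + alphaJS f x₀ 2 Δx = T Δx / Δx ^ 8 := by
      simp only [alphaJS, hTdef, hd0, hd1, hd2]
      rw [hβq 0, hβq 1, hβq 2]
      field_simp
    have hαk : alphaJS f x₀ k Δx = dIdeal k / (g k Δx) ^ 2 / Δx ^ 8 := by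
      have hgq : (g k Δx * Δx ^ 4) ^ 2 = (g k Δx) ^ 2 * Δx ^ 8 := by ring
      simp only [alphaJS]
      rw [hβq k, hgq, ← div_div]
    simp only [omegaJS]
    rw [hαk, hS]
    field_simp
  have final := (hinv.isBigO_one ℝ).mul hbracket
  have final2 : (fun Δx => (dIdeal k / T Δx) * (1 / (g k Δx) ^ 2 - T Δx)) =O[l]
      fun Δx => Δx ^ 1 := by
    refine final.trans ?_
    exact (isBigO_refl _ _).congr_left fun Δx => by rw [one_mul]
  exact final2.congr' (Filter.EventuallyEq.symm hω) Filter.EventuallyEq.rfl
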